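/- arXiv:2412.08289 — 6 statements merged into one kernel-verified Lean document; each statement's English description precedes it below -/
import Mathlib

section
/- For all subsets A, B ⊆ U, φ(A; B) ≥ |B| · dist(A, B) − φ(B; B). -/
open Finset

variable {U : Type*} [Fintype U] [DecidableEq U]

/-- The belonging degree `b(x, A) = (1/l) Σ_{t=1}^l |c_t(x) ∩ A|`,
where `c t x` is the base cluster assigned to `x` in the `t`-th base clustering. -/
noncomputable def bdeg {l : ℕ} (c : Fin l → U → Finset U) (x : U) (A : Finset U) : ℝ :=
  (1 / (l : ℝ)) * ∑ t : Fin l, ((c t x ∩ A).card : ℝ)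

/-- `φ(A; B) = Σ_{x ∈ B} (n - b(x, A))`. -/
noncomputable def phi {l : ℕ} (c : Fin l → U → Finset U) (A B : Finset U) : ℝ :=
  ∑ x ∈ B, ((Fintype.card U : ℝ) - bdeg c x A)

/-- `dist(A, B) = n - |A ∩ B|` (as a real number). -/
noncomputable def hdist (A B : Finset U) : ℝ :=
  (Fintype.card U : ℝ) - ((A ∩ B).card : ℝ)

lemma card_key (S A B : Finset U) :
    ((S ∩ A).card : ℝ) + ((S ∩ B).card : ℝ) ≤ (Fintype.card U : ℝ) + ((A ∩ B).card : ℝ) := by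
  have h := Finset.card_inter_add_card_union (S ∩ A) (S ∩ B)
  have h1 : (S ∩ A) ∩ (S ∩ B) = S ∩ (A ∩ B) := by
    ext x; simp [Finset.mem_inter]; tauto
  have h2 : (S ∩ (A ∩ B)).card ≤ (A ∩ B).card :=
    Finset.card_le_card (Finset.inter_subset_right)
  have h3 : ((S ∩ A) ∪ (S ∩ B)).card ≤ Fintype.card U :=
    Finset.card_le_univ _
  have : (S ∩ A).card + (S ∩ B).card ≤ Fintype.card U + (A ∩ B).card := by
    rw [h1] at h; omega
  calc ((S ∩ A).card : ℝ) + ((S ∩ B).card : ℝ)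
      = (((S ∩ A).card + (S ∩ B).card : ℕ) : ℝ) := by push_cast; ring
    _ ≤ ((Fintype.card U + (A ∩ B).card : ℕ) : ℝ) := by exact_mod_cast this
    _ = (Fintype.card U : ℝ) + ((A ∩ B).card : ℝ) := by push_cast; ring

lemma bdeg_key {l : ℕ} (hl : 1 ≤ l) (c : Fin l → U → Finset U) (x : U) (A B : Finset U) :
    bdeg c x A + bdeg c x B ≤ (Fintype.card U : ℝ) + ((A ∩ B).card : ℝ) := by
  have hlpos : (0 : ℝ) < l := by exact_mod_cast hl
  unfold bdeg
  rw [← mul_add, ← Finset.sum_add_distrib]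
  have hsum : ∑ t : Fin l, (((c t x ∩ A).card : ℝ) + ((c t x ∩ B).card : ℝ))
      ≤ ∑ _t : Fin l, ((Fintype.card U : ℝ) + ((A ∩ B).card : ℝ)) :=
    Finset.sum_le_sum fun t _ => card_key (c t x) A B
  rw [Finset.sum_const, Finset.card_univ, Fintype.card_fin, nsmul_eq_mul] at hsum
  calc (1 / (l : ℝ)) * ∑ t : Fin l, (((c t x ∩ A).card : ℝ) + ((c t x ∩ B).card : ℝ))
      ≤ (1 / (l : ℝ)) * ((l : ℝ) * ((Fintype.card U : ℝ) + ((A ∩ B).card : ℝ))) := by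
        apply mul_le_mul_of_nonneg_left hsum
        positivity
    _ = (Fintype.card U : ℝ) + ((A ∩ B).card : ℝ) := by
        field_simp

/-- For all subsets `A, B ⊆ U`: `φ(A; B) ≥ |B| · dist(A, B) - φ(B; B)`. -/
theorem phi_ge_card_mul_dist_sub_phi {l : ℕ} (hl : 1 ≤ l)
    (c : Fin l → U → Finset U) (A B : Finset U) :
    phi c A B ≥ (B.card : ℝ) * hdist A B - phi c B B := by
  rw [ge_iff_le, sub_le_iff_le_add]
  unfold phi hdist
  rw [← Finset.sum_add_distrib]
  have : (B.card : ℝ) * ((Fintype.card U : ℝ) - ((A ∩ B).card : ℝ))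
      = ∑ _x ∈ B, ((Fintype.card U : ℝ) - ((A ∩ B).card : ℝ)) := by
    rw [Finset.sum_const, nsmul_eq_mul]
  rw [this]
  apply Finset.sum_le_sum
  intro x _
  have := bdeg_key hl c x A B
  linarith
end

section
/- Let g ≥ 0 and Φ ≥ 0 be real numbers and let A, B ⊆ U with B nonempty. If φ(B; B) ≤ Φ (the cost of B is at most the optimal cost Φ) and φ(A; B) ≤ g·Φ (A is a hyperedge produced by a g-approximate algorithm), then dist(A, B) ≤ (g + 1)·Φ / |B|. -/
open Finset

variable {U : Type*} [Fintype U] [DecidableEq U]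

/-- Let `g ≥ 0` and `Φ ≥ 0` be real numbers and let `A, B ⊆ U` with `B` nonempty.
If `φ(B; B) ≤ Φ` and `φ(A; B) ≤ g·Φ`, then `dist(A, B) ≤ (g + 1)·Φ / |B|`. -/
theorem dist_le_approx_bound {l : ℕ} (hl : 1 ≤ l) (c : Fin l → U → Finset U)
    (g Φ : ℝ) (hg : 0 ≤ g) (hΦ : 0 ≤ Φ) (A B : Finset U) (hB : B.Nonempty)
    (hopt : phi c B B ≤ Φ) (happrox : phi c A B ≤ g * Φ) :
    hdist A B ≤ (g + 1) * Φ / (B.card : ℝ) := by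
  have hl0 : (0 : ℝ) < l := by exact_mod_cast hl
  -- key pointwise inequality
  have key : ∀ x : U, hdist A B ≤
      ((Fintype.card U : ℝ) - bdeg c x A) + ((Fintype.card U : ℝ) - bdeg c x B) := by
    intro x
    have hsum : bdeg c x A + bdeg c x B ≤
        (Fintype.card U : ℝ) + ((A ∩ B).card : ℝ) := by
      unfold bdeg
      rw [← mul_add, ← Finset.sum_add_distrib]
      have hterm : ∀ t : Fin l, ((c t x ∩ A).card : ℝ) + ((c t x ∩ B).card : ℝ) ≤
          (Fintype.card U : ℝ) + ((A ∩ B).card : ℝ) := by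
        intro t
        have h1 : (c t x ∩ A).card + (c t x ∩ B).card =
            ((c t x ∩ A) ∪ (c t x ∩ B)).card + ((c t x ∩ A) ∩ (c t x ∩ B)).card :=
          (Finset.card_union_add_card_inter _ _).symm
        have h2 : ((c t x ∩ A) ∪ (c t x ∩ B)).card ≤ Fintype.card U :=
          Finset.card_le_univ _
        have h3 : ((c t x ∩ A) ∩ (c t x ∩ B)).card ≤ (A ∩ B).card := by
          apply Finset.card_le_card
          intro y hy
          simp only [Finset.mem_inter] at hy ⊢
          exact ⟨hy.1.2, hy.2.2⟩
        have : (c t x ∩ A).card + (c t x ∩ B).card ≤ Fintype.card U + (A ∩ B).card := by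
          omega
        exact_mod_cast this
      calc (1 / (l : ℝ)) * ∑ t : Fin l,
            (((c t x ∩ A).card : ℝ) + ((c t x ∩ B).card : ℝ))
          ≤ (1 / (l : ℝ)) * ∑ _t : Fin l,
            ((Fintype.card U : ℝ) + ((A ∩ B).card : ℝ)) := by
            apply mul_le_mul_of_nonneg_left
            · exact Finset.sum_le_sum fun t _ => hterm t
            · positivity
        _ = (Fintype.card U : ℝ) + ((A ∩ B).card : ℝ) := by
            rw [Finset.sum_const]
            simp only [Finset.card_univ, Fintype.card_fin, nsmul_eq_mul]
            field_simp
    unfold hdist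
    linarith
  -- sum over B
  have hsumB : (B.card : ℝ) * hdist A B ≤ phi c A B + phi c B B := by
    have := Finset.sum_le_sum (fun x (_ : x ∈ B) => key x)
    simpa [phi, Finset.sum_add_distrib, Finset.sum_const, nsmul_eq_mul, mul_comm] using this
  have hBpos : (0 : ℝ) < (B.card : ℝ) := by exact_mod_cast hB.card_pos
  rw [le_div_iff₀ hBpos]
  nlinarith [hsumB]
end

section
/- For every integer n with 0 ≤ n ≤ N, Σ_{i=n}^N i·Bin(N, p)(i) = N·p·(Σ_{i=n}^N Bin(N, p)(i)) + n·(1 − p)·Bin(N, p)(n). -/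
open Finset

/-- The probability mass function of the binomial distribution with parameters
`N` and `p`: `Bin(N, p)(i) = C(N, i) · p^i · (1 - p)^(N - i)`. -/
noncomputable def binPMF (N : ℕ) (p : ℝ) (i : ℕ) : ℝ :=
  (N.choose i : ℝ) * p ^ i * (1 - p) ^ (N - i)

lemma binPMF_step (N n : ℕ) (p : ℝ) (h : n < N) :
    ((n : ℝ) + 1) * (1 - p) * binPMF N p (n + 1)
      = ((N : ℝ) - n) * p * binPMF N p n := by
  unfold binPMF
  have h1 : N - (n + 1) + 1 = N - n := by omega
  have h2 : ((N.choose (n + 1) : ℝ)) * ((n : ℝ) + 1)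
      = (N.choose n : ℝ) * ((N : ℝ) - (n : ℝ)) := by
    have := Nat.choose_succ_right_eq N n
    have := congrArg (Nat.cast (R := ℝ)) this
    push_cast [Nat.cast_sub h.le] at this
    linarith [this]
  have h3 : (1 - p) ^ (N - n) = (1 - p) ^ (N - (n + 1)) * (1 - p) := by
    rw [← pow_succ, h1]
  rw [h3]
  linear_combination (p ^ (n + 1) * (1 - p) ^ (N - (n + 1)) * (1 - p)) * h2

/-- For every integer `n` with `0 ≤ n ≤ N`,
`Σ_{i=n}^N i·Bin(N,p)(i) = N·p·(Σ_{i=n}^N Bin(N,p)(i)) + n·(1-p)·Bin(N,p)(n)`. -/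
theorem binomial_partial_sum_identity (N : ℕ) (hN : 0 < N) (p : ℝ)
    (hp0 : 0 ≤ p) (hp1 : p ≤ 1) (n : ℕ) (hn : n ≤ N) :
    ∑ i ∈ Finset.Icc n N, (i : ℝ) * binPMF N p i
      = (N : ℝ) * p * (∑ i ∈ Finset.Icc n N, binPMF N p i)
        + (n : ℝ) * (1 - p) * binPMF N p n := by
  suffices H : ∀ k ≤ N, ∑ i ∈ Finset.Icc (N - k) N, (i : ℝ) * binPMF N p i
      = (N : ℝ) * p * (∑ i ∈ Finset.Icc (N - k) N, binPMF N p i)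
        + ((N - k : ℕ) : ℝ) * (1 - p) * binPMF N p (N - k) by
    have := H (N - n) (Nat.sub_le _ _)
    rwa [Nat.sub_sub_self hn] at this
  intro k hk
  induction k with
  | zero =>
      simp only [Nat.sub_zero, Finset.Icc_self, Finset.sum_singleton]
      unfold binPMF
      simp
      ring
  | succ k ih =>
      have ih' := ih (by omega)
      set n := N - (k + 1) with hn'
      have hnN : n < N := by omega
      have hsucc : n + 1 = N - k := by omega
      have hins : Finset.Icc n N = insert n (Finset.Icc (n + 1) N) := by
        rw [Finset.Icc_add_one_left_eq_Ioc, Finset.Ioc_insert_left hnN.le]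
      have hnot : n ∉ Finset.Icc (n + 1) N := by simp
      rw [hins, Finset.sum_insert hnot, Finset.sum_insert hnot]
      rw [← hsucc] at ih'
      push_cast at ih' ⊢
      have hstep := binPMF_step N n p hnN
      linear_combination ih' + hstep
end

section
/- For all integers i with 0 < i < N, the binomial coefficient satisfies C(N, i) ≤ (N^N / (i^i · (N − i)^{N−i})) · (1/√(2π)) · √(N / (i·(N − i))). -/
open Real

private lemma sqrtpi_le_Stirling.stirlingSeq (n : ℕ) (hn : 0 < n) : Real.sqrt π ≤ Stirling.stirlingSeq n := by
  obtain ⟨m, rfl⟩ : ∃ m, n = m + 1 := ⟨n - 1, by omega⟩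
  exact Stirling.stirlingSeq'_antitone.le_of_tendsto
    (Stirling.tendsto_stirlingSeq_sqrt_pi.comp (Filter.tendsto_add_atTop_nat 1)) m

private lemma Stirling.stirlingSeq_anti {a b : ℕ} (ha : 0 < a) (hab : a ≤ b) :
    Stirling.stirlingSeq b ≤ Stirling.stirlingSeq a := by
  have := Stirling.stirlingSeq'_antitone (show a - 1 ≤ b - 1 by omega)
  simpa [Function.comp, Nat.succ_eq_add_one, Nat.sub_add_cancel ha,
    Nat.sub_add_cancel (ha.trans_le hab)] using this

private lemma factorial_eq_stirling (n : ℕ) (hn : 0 < n) :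
    (n.factorial : ℝ) = Stirling.stirlingSeq n * (Real.sqrt (2 * n) * ((n : ℝ) / Real.exp 1) ^ n) := by
  have h1 : (0:ℝ) < Real.sqrt (2 * n) := Real.sqrt_pos.mpr (by positivity)
  have h2 : (0:ℝ) < ((n:ℝ) / Real.exp 1) ^ n := by positivity
  rw [Stirling.stirlingSeq]
  field_simp

/-- For all integers `i` with `0 < i < N`, the binomial coefficient satisfies
`C(N, i) ≤ (N^N / (i^i · (N-i)^(N-i))) · (1/√(2π)) · √(N / (i·(N-i)))`. -/
theorem choose_le_stirling_bound (N i : ℕ) (hi : 0 < i) (hiN : i < N) :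
    (N.choose i : ℝ)
      ≤ ((N : ℝ) ^ N / ((i : ℝ) ^ i * ((N - i : ℕ) : ℝ) ^ (N - i)))
          * (1 / Real.sqrt (2 * Real.pi))
          * Real.sqrt ((N : ℝ) / ((i : ℝ) * ((N - i : ℕ) : ℝ))) := by
  set m := N - i with hm_def
  have hm : 0 < m := by omega
  have hNm : N = i + m := by omega
  have hi0 : (0:ℝ) < i := Nat.cast_pos.mpr hi
  have hm0 : (0:ℝ) < m := Nat.cast_pos.mpr hm
  have hN0 : (0:ℝ) < N := Nat.cast_pos.mpr (by omega)
  have hπ : (0:ℝ) < π := Real.pi_pos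
  have hsπ : (0:ℝ) < Real.sqrt π := Real.sqrt_pos.mpr hπ
  have hsi : (0:ℝ) < Stirling.stirlingSeq i := by
    obtain ⟨k, rfl⟩ : ∃ k, i = k + 1 := ⟨i - 1, by omega⟩
    exact Stirling.stirlingSeq'_pos k
  have hsN : (0:ℝ) < Stirling.stirlingSeq N := by
    obtain ⟨k, hk⟩ : ∃ k, N = k + 1 := ⟨N - 1, by omega⟩
    rw [hk]; exact Stirling.stirlingSeq'_pos k
  set Ai := Real.sqrt (2 * i) * ((i : ℝ) / Real.exp 1) ^ i with hAi_def
  set Am := Real.sqrt (2 * m) * ((m : ℝ) / Real.exp 1) ^ m with hAm_def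
  set AN := Real.sqrt (2 * N) * ((N : ℝ) / Real.exp 1) ^ N with hAN_def
  have hAi : (0:ℝ) < Ai := by rw [hAi_def]; positivity
  have hAm : (0:ℝ) < Am := by rw [hAm_def]; positivity
  have hAN : (0:ℝ) < AN := by rw [hAN_def]; positivity
  rw [Nat.cast_choose ℝ hiN.le, factorial_eq_stirling N (by omega),
    factorial_eq_stirling i hi, ← hm_def, factorial_eq_stirling m hm,
    ← hAi_def, ← hAm_def, ← hAN_def]
  have step1 : Stirling.stirlingSeq N * AN / (Stirling.stirlingSeq i * Ai * (Stirling.stirlingSeq m * Am))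
      ≤ Stirling.stirlingSeq i * AN / (Stirling.stirlingSeq i * Ai * (Real.sqrt π * Am)) := by
    gcongr
    · exact Stirling.stirlingSeq_anti hi hiN.le
    · exact sqrtpi_le_Stirling.stirlingSeq m hm
  refine step1.trans (le_of_eq ?_)
  have hcancel : Stirling.stirlingSeq i * AN / (Stirling.stirlingSeq i * Ai * (Real.sqrt π * Am))
      = AN / (Ai * (Real.sqrt π * Am)) := by
    field_simp
  rw [hcancel, hAi_def, hAm_def, hAN_def]
  have e2 : (0:ℝ) ≤ 2 := by norm_num
  rw [Real.sqrt_mul e2 (N:ℝ), Real.sqrt_mul e2 (i:ℝ), Real.sqrt_mul e2 (m:ℝ),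
    Real.sqrt_mul e2 π, Real.sqrt_div hN0.le, Real.sqrt_mul hi0.le,
    div_pow, div_pow, div_pow, hNm, pow_add (Real.exp 1)]
  have hsqrts : ∀ x : ℝ, 0 < x → (0:ℝ) < Real.sqrt x := fun x hx => Real.sqrt_pos.mpr hx
  have h2 := hsqrts 2 (by norm_num)
  have hsN' := hsqrts _ hN0
  have hsi' := hsqrts _ hi0
  have hsm' := hsqrts _ hm0
  have hei : (0:ℝ) < Real.exp 1 ^ i := by positivity
  have hem : (0:ℝ) < Real.exp 1 ^ m := by positivity
  have hii : (0:ℝ) < (i:ℝ) ^ i := by positivity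
  have hmm : (0:ℝ) < (m:ℝ) ^ m := by positivity
  field_simp
end

section
/- For all integers i with 0 < i < N and all real p ∈ [0, 1], Bin(N, p)(i) ≤ √(N / (2π·i·(N − i))). -/
/-! The factor `p ^ i * (1 - p) ^ (N - i)` is largest at `p = i / N` (weighted AM-GM), so it
suffices to bound `C(N, i) * i ^ i * (N - i) ^ (N - i) / N ^ N`. Write `n! = s n * √(2n) * (n / e) ^ n`
with the Stirling sequence `s`, which decreases from `n = 1` on towards `√π`. Then
`N! ≤ s i * √(2N) * (N / e) ^ N` and `(N - i)! ≥ √π * √(2(N - i)) * ((N - i) / e) ^ (N - i)`; the factor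
`s i` cancels against the one in `i!`, and what is left is `√(N / (2π i (N - i)))`. -/

open Real Nat Stirling

lemma pow_mul_one_sub_pow_le {p : ℝ} (hp0 : 0 ≤ p) (hp1 : p ≤ 1) {i j : ℕ} (hi : i ≠ 0)
    (hj : j ≠ 0) : p ^ i * (1 - p) ^ j ≤ (i / (i + j) : ℝ) ^ i * (j / (i + j) : ℝ) ^ j := by
  have hn : (0 : ℝ) < i + j := by positivity
  set a : ℝ := i / (i + j)
  set b : ℝ := j / (i + j)
  have ha : 0 < a := by positivity
  have hb : 0 < b := by positivity
  have hab : a + b = 1 := by rw [← add_div, div_self hn.ne']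
  have hpa : 0 ≤ p / a := div_nonneg hp0 ha.le
  have hqb : 0 ≤ (1 - p) / b := div_nonneg (sub_nonneg.2 hp1) hb.le
  -- AM-GM with weights `a`, `b`: the weighted arithmetic mean of `p / a` and `(1 - p) / b` is `1`
  have amgm := geom_mean_le_arith_mean2_weighted ha.le hb.le hpa hqb hab
  rw [mul_div_cancel₀ _ ha.ne', mul_div_cancel₀ _ hb.ne', add_sub_cancel] at amgm
  have hai : a * ((i + j : ℕ) : ℝ) = i := by push_cast; exact div_mul_cancel₀ _ hn.ne'
  have hbj : b * ((i + j : ℕ) : ℝ) = j := by push_cast; exact div_mul_cancel₀ _ hn.ne'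
  have hpow := pow_le_one₀ (n := i + j) (by positivity) amgm
  rw [mul_pow, ← rpow_mul_natCast hpa, ← rpow_mul_natCast hqb, hai, hbj, rpow_natCast, rpow_natCast,
    div_pow p a, div_pow (1 - p) b, ← mul_div_mul_comm, div_le_one (by positivity)] at hpow
  exact hpow

lemma stirlingSeq_le_of_le {m n : ℕ} (hm : m ≠ 0) (h : m ≤ n) : stirlingSeq n ≤ stirlingSeq m := by
  obtain ⟨m, rfl⟩ := Nat.exists_eq_succ_of_ne_zero hm
  obtain ⟨n, rfl⟩ := Nat.exists_eq_succ_of_ne_zero (by omega : n ≠ 0)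
  exact stirlingSeq'_antitone (Nat.succ_le_succ_iff.1 h)

lemma factorial_eq_stirlingSeq_mul {n : ℕ} (hn : n ≠ 0) :
    (n ! : ℝ) = stirlingSeq n * (√(2 * n) * (n / exp 1) ^ n) := by
  rw [stirlingSeq, div_mul_cancel₀]
  positivity

lemma choose_mul_pow_mul_pow_le {i j : ℕ} (hi : i ≠ 0) (hj : j ≠ 0) :
    ((i + j).choose i : ℝ) * i ^ i * j ^ j ≤ √((i + j) / (2 * π * i * j)) * (i + j) ^ (i + j) := by
  have hs : 0 < stirlingSeq i := (sqrt_pos.2 pi_pos).trans_le (sqrt_pi_le_stirlingSeq hi)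
  have h_fact_i := factorial_eq_stirlingSeq_mul hi
  have h_fact_n : ((i + j) ! : ℝ) ≤ stirlingSeq i * (√(2 * (i + j)) * ((i + j) / exp 1) ^ (i + j)) := by
    rw [factorial_eq_stirlingSeq_mul (by omega)]
    push_cast
    gcongr
    exact stirlingSeq_le_of_le hi (by omega)
  have h_choose : ((i + j).choose i : ℝ) * i ! * j ! = (i + j) ! := by
    rw [Nat.choose_symm_add]
    exact_mod_cast Nat.add_choose_mul_factorial_mul_factorial i j
  have h_sqrt : √((i + j) / (2 * π * i * j)) * (√(2 * i) * √(2 * π * j)) = √(2 * (i + j)) := by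
    rw [← sqrt_mul (by positivity), ← sqrt_mul (by positivity)]
    congr 1
    field_simp
  set c := exp (i + j) / (stirlingSeq i * (√(2 * i) * √(2 * π * j)))
  calc ((i + j).choose i : ℝ) * i ^ i * j ^ j
      = (i + j).choose i * (stirlingSeq i * (√(2 * i) * (i / exp 1) ^ i))
          * (√(2 * π * j) * (j / exp 1) ^ j) * c := by
        simp only [c, div_pow, exp_add, ← exp_nat_mul]
        field_simp
    _ ≤ (i + j).choose i * i ! * j ! * c := by
        rw [← h_fact_i]
        gcongr
        exact le_factorial_stirling j
    _ ≤ stirlingSeq i * (√(2 * (i + j)) * ((i + j) / exp 1) ^ (i + j)) * c := by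
        rw [h_choose]
        exact mul_le_mul_of_nonneg_right h_fact_n (by positivity)
    _ = √((i + j) / (2 * π * i * j)) * (i + j) ^ (i + j) := by
        rw [← h_sqrt]
        simp only [c, div_pow, ← exp_nat_mul, Nat.cast_add]
        field_simp

/-- For all integers `i` with `0 < i < N` and all real `p ∈ [0, 1]`,
`Bin(N, p)(i) ≤ √(N / (2π·i·(N-i)))`. -/
theorem binPMF_le_sqrt_bound (N i : ℕ) (hi : 0 < i) (hiN : i < N)
    (p : ℝ) (hp0 : 0 ≤ p) (hp1 : p ≤ 1) :
    binPMF N p i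
      ≤ Real.sqrt ((N : ℝ) / (2 * Real.pi * (i : ℝ) * ((N - i : ℕ) : ℝ))) := by
  obtain ⟨j, rfl⟩ := Nat.exists_eq_add_of_le hiN.le
  have hj : j ≠ 0 := by omega
  rw [binPMF, Nat.add_sub_cancel_left, mul_assoc]
  push_cast
  calc ((i + j).choose i : ℝ) * (p ^ i * (1 - p) ^ j)
      ≤ (i + j).choose i * ((i / (i + j) : ℝ) ^ i * (j / (i + j) : ℝ) ^ j) := by
        exact mul_le_mul_of_nonneg_left (pow_mul_one_sub_pow_le hp0 hp1 hi.ne' hj) (by positivity)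
    _ = (i + j).choose i * i ^ i * j ^ j / (i + j) ^ (i + j) := by
        rw [div_pow, div_pow, pow_add]
        ring
    _ ≤ _ := by
        rw [div_le_iff₀ (by positivity)]
        exact choose_mul_pow_mul_pow_le hi.ne' hj
end

section
/- Suppose m := N·p is an integer (so 0 ≤ m ≤ N). Then the mean absolute deviation of the binomial distribution satisfies Σ_{i=0}^N |i − m|·Bin(N, p)(i) = 2·m·(1 − p)·Bin(N, p)(m). -/
open Finset

noncomputable def auxF (N : ℕ) (p : ℝ) : ℕ → ℝ
  | 0 => 0
  | (i+1) => binPMF (N-1) p i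

lemma key (N : ℕ) (hN : 0 < N) (p : ℝ) (i : ℕ) (hi : i ≤ N) :
    ((i:ℝ) - N*p) * binPMF N p i = N*p*(1-p) * (auxF N p i - auxF N p (i+1)) := by
  obtain ⟨M, rfl⟩ : ∃ M, N = M + 1 := ⟨N - 1, by omega⟩
  cases i with
  | zero =>
      simp only [auxF, binPMF, Nat.add_sub_cancel, Nat.choose_zero_right, Nat.sub_zero,
        Nat.cast_zero, Nat.cast_one, pow_zero]
      rw [pow_succ]
      push_cast
      ring
  | succ j =>
      simp only [auxF, binPMF, Nat.add_sub_cancel]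
      rcases Nat.lt_or_ge (j+1) (M+1) with h | h
      · -- j + 1 ≤ M
        have hj : j + 1 ≤ M := by omega
        have e1 : M + 1 - (j+1) = (M - (j+1)) + 1 := by omega
        have e2 : M - j = (M - (j+1)) + 1 := by omega
        have h0 : (j+1) * (M.choose j + M.choose (j+1)) = (M+1) * M.choose j := by
          rw [← Nat.choose_succ_succ, Nat.add_one_mul_choose_eq, Nat.mul_comm]
        have h1 : ((j:ℝ)+1) * ((M.choose j : ℝ) + (M.choose (j+1) : ℝ)) =
            ((M:ℝ)+1) * (M.choose j : ℝ) := by exact_mod_cast h0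
        have h2 : ((M+1).choose (j+1) : ℝ) = (M.choose j : ℝ) + (M.choose (j+1) : ℝ) := by
          push_cast [Nat.choose_succ_succ M j]; ring
        rw [e1, e2, h2, pow_succ, pow_succ]
        push_cast
        linear_combination (p ^ j * p * (1-p) ^ (M - (j+1)) * (1-p)) * h1
      · -- j = M
        have hj : j = M := by omega
        subst hj
        simp only [Nat.choose_self, Nat.sub_self, pow_zero, Nat.choose_succ_self,
          Nat.cast_zero, Nat.cast_one]
        rw [pow_succ]
        push_cast
        ring

lemma auxF_top (N : ℕ) (hN : 0 < N) (p : ℝ) : auxF N p (N+1) = 0 := by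
  obtain ⟨M, rfl⟩ : ∃ M, N = M + 1 := ⟨N - 1, by omega⟩
  simp only [auxF, binPMF, Nat.add_sub_cancel]
  rw [Nat.choose_eq_zero_of_lt (by omega)]
  simp

lemma mB (N : ℕ) (p : ℝ) (m : ℕ) (hm1 : 1 ≤ m) (hmN : m ≤ N) :
    (m:ℝ) * binPMF N p m = N * p * auxF N p m := by
  obtain ⟨M, rfl⟩ : ∃ M, N = M + 1 := ⟨N - 1, by omega⟩
  obtain ⟨k, rfl⟩ : ∃ k, m = k + 1 := ⟨m - 1, by omega⟩
  simp only [auxF, binPMF, Nat.add_sub_cancel]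
  have e1 : M + 1 - (k+1) = M - k := by omega
  have h0 : (k+1) * (M+1).choose (k+1) = (M+1) * M.choose k := by
    rw [Nat.add_one_mul_choose_eq, Nat.mul_comm]
  have h1 : ((k:ℝ)+1) * ((M+1).choose (k+1) : ℝ) = ((M:ℝ)+1) * (M.choose k : ℝ) := by
    exact_mod_cast h0
  rw [e1, pow_succ]
  push_cast
  linear_combination (p * p ^ k * (1-p) ^ (M - k)) * h1

/-- If `m := N·p` is an integer, then the mean absolute deviation of the
binomial distribution satisfies
`Σ_{i=0}^N |i - m|·Bin(N,p)(i) = 2·m·(1-p)·Bin(N,p)(m)`. -/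
theorem binomial_mad_eq (N : ℕ) (hN : 0 < N) (p : ℝ) (hp0 : 0 ≤ p) (hp1 : p ≤ 1)
    (m : ℕ) (hm : (m : ℝ) = (N : ℝ) * p) :
    ∑ i ∈ Finset.range (N + 1), |(i : ℝ) - (m : ℝ)| * binPMF N p i
      = 2 * (m : ℝ) * (1 - p) * binPMF N p m := by
  rcases Nat.eq_zero_or_pos m with hm0 | hmpos
  · subst hm0
    have hp : p = 0 := by
      have h' : (N:ℝ) * p = 0 := by exact_mod_cast hm.symm
      rcases mul_eq_zero.mp h' with h | h
      · exact absurd (Nat.cast_eq_zero.mp h) (by omega)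
      · exact h
    subst hp
    rw [show (2:ℝ) * ((0:ℕ):ℝ) * (1 - 0) * binPMF N 0 0 = 0 by push_cast; ring]
    apply Finset.sum_eq_zero
    intro i _
    cases i with
    | zero => simp
    | succ j => simp [binPMF]
  · have hmN : m ≤ N := by
      have : (m:ℝ) ≤ N := by rw [hm]; nlinarith
      exact_mod_cast this
    have key' : ∀ i, i ≤ N → ((i:ℝ) - m) * binPMF N p i
        = N*p*(1-p) * (auxF N p i - auxF N p (i+1)) := by
      intro i hi
      rw [hm]
      exact key N hN p i hi
    have h0 : auxF N p 0 = 0 := rfl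
    have htop := auxF_top N hN p
    have s1 : ∑ i ∈ range m, ((i:ℝ) - m) * binPMF N p i
        = N*p*(1-p) * (auxF N p 0 - auxF N p m) := by
      rw [← Finset.sum_range_sub' (fun i => auxF N p i) m, Finset.mul_sum]
      exact Finset.sum_congr rfl fun i hi =>
        key' i (by have := Finset.mem_range.mp hi; omega)
    have s0 : ∑ i ∈ range (N+1), ((i:ℝ) - m) * binPMF N p i = 0 := by
      have : ∑ i ∈ range (N+1), ((i:ℝ) - m) * binPMF N p i
          = N*p*(1-p) * (auxF N p 0 - auxF N p (N+1)) := by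
        rw [← Finset.sum_range_sub' (fun i => auxF N p i) (N+1), Finset.mul_sum]
        exact Finset.sum_congr rfl fun i hi =>
          key' i (by have := Finset.mem_range.mp hi; omega)
      rw [this, h0, htop]; ring
    have sIco : ∑ i ∈ Finset.Ico m (N+1), ((i:ℝ) - m) * binPMF N p i
        = N*p*(1-p) * auxF N p m := by
      rw [Finset.sum_Ico_eq_sub _ (by omega), s0, s1, h0]; ring
    have hsplit : ∑ i ∈ range (N+1), |(i:ℝ) - m| * binPMF N p i
        = ∑ i ∈ range m, ((m:ℝ) - i) * binPMF N p i
          + ∑ i ∈ Finset.Ico m (N+1), ((i:ℝ) - m) * binPMF N p i := by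
      rw [Finset.range_eq_Ico, ← Finset.sum_Ico_consecutive _ (Nat.zero_le m)
        (by omega : m ≤ N+1)]
      congr 1
      · rw [← Finset.range_eq_Ico]
        apply Finset.sum_congr rfl
        intro i hi
        have : i < m := Finset.mem_range.mp hi
        rw [abs_sub_comm, abs_of_nonneg (by
          have : (i:ℝ) ≤ m := by exact_mod_cast this.le
          linarith)]
      · apply Finset.sum_congr rfl
        intro i hi
        have : m ≤ i := (Finset.mem_Ico.mp hi).1
        rw [abs_of_nonneg (by
          have : (m:ℝ) ≤ i := by exact_mod_cast this
          linarith)]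
    have sneg : ∑ i ∈ range m, ((m:ℝ) - i) * binPMF N p i
        = N*p*(1-p) * auxF N p m := by
      have : ∑ i ∈ range m, ((m:ℝ) - i) * binPMF N p i
          = -∑ i ∈ range m, ((i:ℝ) - m) * binPMF N p i := by
        rw [← Finset.sum_neg_distrib]
        exact Finset.sum_congr rfl fun i _ => by ring
      rw [this, s1, h0]; ring
    have hmb := mB N p m hmpos hmN
    rw [hsplit, sneg, sIco]
    linear_combination (-2)*(1-p) * hmb
end
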